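/- Every right-closing cellular automaton of radius 1 on A^{Σ*} with |Σ| = 2 is an open map. -/

import Mathlib

open Function

variable {Sig A : Type*}

/-- Configurations over the tree `Sig*`: maps from the free monoid (lists) to `A`. -/
abbrev Config (Sig A : Type*) := List Sig → A

/-- Shift action: `(shift f v) w = f (v ++ w)`. -/
def shift (f : Config Sig A) (v : List Sig) : Config Sig A := fun w => f (v ++ w)

/-- `Delta Sig n` is the set of words of length `< n` (i.e. `Δ_n`). -/
def Delta (Sig : Type*) (n : ℕ) : Type _ := {w : List Sig // w.length < n}

/-- Restriction of a configuration to `Δ_n`. -/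
def restrict (f : Config Sig A) (n : ℕ) : Delta Sig n → A := fun w => f w.val

/-- The CA defined by a local map `μ` of radius `r`. -/
def caMap (r : ℕ) (μ : (Delta Sig (r + 1) → A) → A) : Config Sig A → Config Sig A :=
  fun f v => μ (restrict (shift f v) (r + 1))

/-- `τ` is a cellular automaton: it admits a radius `r ≥ 1` and a local defining map. -/
def IsCA (τ : Config Sig A → Config Sig A) : Prop :=
  ∃ r : ℕ, 1 ≤ r ∧ ∃ μ : (Delta Sig (r + 1) → A) → A,
    ∀ (f : Config Sig A) (v : List Sig), τ f v = μ (restrict (shift f v) (r + 1))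

/-- A subshift: a closed, shift-invariant set of configurations. -/
def IsSubshift [TopologicalSpace A] (X : Set (Config Sig A)) : Prop :=
  IsClosed X ∧ ∀ f ∈ X, ∀ v : List Sig, shift f v ∈ X

/-- The blocks of size `n` of `X`. -/
def blockSet (X : Set (Config Sig A)) (n : ℕ) : Set (Delta Sig n → A) :=
  {p | ∃ f ∈ X, restrict f n = p}

/-- Positive expansiveness with constant `N`. -/
def PosExpansive (τ : Config Sig A → Config Sig A) (N : ℕ) : Prop :=
  1 ≤ N ∧ ∀ f₁ f₂ : Config Sig A, f₁ ≠ f₂ →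
    ∃ t : ℕ, restrict (τ^[t] f₁) N ≠ restrict (τ^[t] f₂) N

/-- The set `P(τ, n, t)` of `t`-tuples of traces on `Δ_n`. -/
def Pset (τ : Config Sig A → Config Sig A) (n t : ℕ) : Set (Fin t → Delta Sig n → A) :=
  {s | ∃ f : Config Sig A, ∀ i : Fin t, s i = restrict (τ^[(i : ℕ)] f) n}

/-- The block `a ◁ p` on `Δ_{r+1}` with root value `a` and agreeing with `p` elsewhere. -/
def rootIns (r : ℕ) (a : A) (p : {w : List Sig // w.length < r + 1 ∧ w ≠ []} → A) :
    Delta Sig (r + 1) → A :=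
  fun w => if h : w.val.length = 0 then a else
    p ⟨w.val, ⟨w.2, fun he => h (by simp [he])⟩⟩

/-- Permutivity: for every pattern on `Δ_{r+1} \ {ε}`, the induced map on root values is
a permutation of `A`. -/
def Permutive (r : ℕ) (μ : (Delta Sig (r + 1) → A) → A) : Prop :=
  ∀ p : {w : List Sig // w.length < r + 1 ∧ w ≠ []} → A,
    Function.Bijective (fun a : A => μ (rootIns r a p))

/-- The image under the local map `μ` of a block of size `n + r`: a block of size `n`. -/
def blockImage (r n : ℕ) (μ : (Delta Sig (r + 1) → A) → A)
    (p : Delta Sig (n + r) → A) : Delta Sig n → A :=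
  fun v => μ (fun w => p ⟨v.val ++ w.val, by
    have hv := v.2; have hw := w.2
    simp only [List.length_append]; omega⟩)

/-- A diamond of `(r, μ)`: two distinct blocks of size `n = m + r > 2r + 2` coinciding
with a block `p ∈ A^{Δ_r}` on `Δ_r` and on `vΔ_r` for every `v` of length `m = n - r`,
with the same image under `μ`. -/
def HasDiamond (r : ℕ) (μ : (Delta Sig (r + 1) → A) → A) : Prop :=
  ∃ (m : ℕ) (_ : r + 2 < m) (p : Delta Sig r → A)
    (p₁ p₂ : Delta Sig (m + r) → A),
    p₁ ≠ p₂ ∧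
    (∀ w : Delta Sig r,
      p₁ ⟨w.val, by have := w.2; omega⟩ = p w ∧
      p₂ ⟨w.val, by have := w.2; omega⟩ = p w) ∧
    (∀ v : List Sig, ∀ hv : v.length = m, ∀ w : Delta Sig r,
      p₁ ⟨v ++ w.val, by have := w.2; simp only [List.length_append]; omega⟩ = p w ∧
      p₂ ⟨v ++ w.val, by have := w.2; simp only [List.length_append]; omega⟩ = p w) ∧
    blockImage r m μ p₁ = blockImage r m μ p₂

/-- Right-closingness of the CA `caMap r μ`. -/
def RightClosing (r : ℕ) (μ : (Delta Sig (r + 1) → A) → A) : Prop :=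
  ∃ N : ℕ, ∀ (p : Delta Sig r → A) (q : Delta Sig (r * N) → A),
    (∃ f : Config Sig A, restrict f r = p ∧ restrict (caMap r μ f) (r * N) = q) →
    ∃! ps : {v : List Sig // v.length = r} → Delta Sig r → A,
      ∀ f : Config Sig A, restrict f r = p → restrict (caMap r μ f) (r * N) = q →
        ∀ (v : {v : List Sig // v.length = r}) (w : Delta Sig r),
          f (v.val ++ w.val) = ps v w

/-!
Right-closingness at radius one says that a configuration is determined by its root value and
its image. Consequently, if `R g` denotes the set of root values of preimages of `g`, the
preimages of `graft d g` with root `a` correspond to the families `b i ∈ R (g i)` with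
`μ (star a b) = d`, whence `∑ d, |R (graft d g)| = |A| * ∏ i, |R (g i)|`. Evaluated at a
maximiser of `|R|` this gives `M ^ |Σ| ≤ M`, so `|R| ≤ 1` as `|Σ| ≥ 2`, and the CA is injective.
Evaluated at configurations `g i` in the image it shows that the image is stable under grafting,
hence dense, hence everything as it is compact. A continuous bijection of the compact Hausdorff
configuration space is a homeomorphism, so it is open.
-/

namespace Config

theorem shift_shift (f : Config Sig A) (v w : List Sig) :
    shift (shift f v) w = shift f (v ++ w) := by
  funext u
  simp only [shift, List.append_assoc]

theorem caMap_shift (r : ℕ) (μ : (Delta Sig (r + 1) → A) → A) (f : Config Sig A)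
    (v : List Sig) : caMap r μ (shift f v) = shift (caMap r μ f) v := by
  funext w
  simp only [caMap, shift_shift]
  rfl

theorem continuous_caMap [Finite Sig] [TopologicalSpace A] [DiscreteTopology A] (r : ℕ)
    (μ : (Delta Sig (r + 1) → A) → A) : Continuous (caMap r μ) := by
  have : Finite (Delta Sig (r + 1)) := (List.finite_length_lt Sig (r + 1)).to_subtype
  exact continuous_pi fun v =>
    continuous_of_discreteTopology.comp (continuous_pi fun w => continuous_apply (v ++ w.val))

def graft (a : A) (g : Sig → Config Sig A) : Config Sig A
  | [] => a
  | i :: w => g i w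

theorem graft_nil (a : A) (g : Sig → Config Sig A) : graft a g [] = a := rfl

theorem shift_graft_singleton (a : A) (g : Sig → Config Sig A) (i : Sig) :
    shift (graft a g) [i] = g i := rfl

def star (a : A) (b : Sig → A) : Delta Sig (1 + 1) → A
  | ⟨[], _⟩ => a
  | ⟨i :: _, _⟩ => b i

theorem caMap_apply_nil (μ : (Delta Sig (1 + 1) → A) → A) (f : Config Sig A) :
    caMap 1 μ f [] = μ (star (f []) fun i => f [i]) := by
  refine congrArg μ (funext fun ⟨u, hu⟩ => ?_)
  match u, hu with
  | [], _ => rfl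
  | [_], _ => rfl

theorem caMap_graft (μ : (Delta Sig (1 + 1) → A) → A) (a : A) (g : Sig → Config Sig A) :
    caMap 1 μ (graft a g) = graft (μ (star a fun i => g i [])) fun i => caMap 1 μ (g i) := by
  funext w
  cases w with
  | nil => exact caMap_apply_nil μ (graft a g)
  | cons i w => rfl

theorem eq_univ_of_isClosed_of_graft_mem [TopologicalSpace A] {S : Set (Config Sig A)}
    (hS : IsClosed S) (hne : S.Nonempty) (hgraft : ∀ a g, (∀ i, g i ∈ S) → graft a g ∈ S) :
    S = Set.univ := by
  have approx : ∀ (n : ℕ) (q : Config Sig A),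
      ∃ s ∈ S, ∀ w : List Sig, w.length < n → s w = q w := by
    intro n
    induction n with
    | zero => exact fun _ => hne.imp fun s hs => ⟨hs, fun w hw => absurd hw (Nat.not_lt_zero _)⟩
    | succ n ih =>
      intro q
      choose s hsS hsq using fun i => ih (shift q [i])
      refine ⟨graft (q []) s, hgraft _ _ hsS, ?_⟩
      rintro (_ | ⟨i, w⟩) hw
      · rfl
      · exact hsq i w (by simpa using hw)
  refine Set.eq_univ_of_forall fun q => ?_
  choose s hsS hsq using fun n => approx n q
  refine hS.mem_of_tendsto (b := Filter.atTop)
    (tendsto_pi_nhds.2 fun w => tendsto_nhds_of_eventually_eq ?_) (Filter.Eventually.of_forall hsS)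
  exact (Filter.eventually_gt_atTop w.length).mono fun n hn => hsq n w hn

end Config

open Config

section RadiusOne

variable {μ : (Delta Sig (1 + 1) → A) → A}

open Classical in
noncomputable def rootValues [Fintype A] (μ : (Delta Sig (1 + 1) → A) → A) (g : Config Sig A) :
    Finset A :=
  Finset.univ.filter fun a => ∃ f, caMap 1 μ f = g ∧ f [] = a

theorem mem_rootValues [Fintype A] {g : Config Sig A} {a : A} :
    a ∈ rootValues μ g ↔ ∃ f, caMap 1 μ f = g ∧ f [] = a := by
  simp [rootValues]

namespace RightClosing

theorem apply_singleton_eq (h : RightClosing 1 μ) {f f' : Config Sig A} (hroot : f [] = f' [])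
    (hτ : caMap 1 μ f = caMap 1 μ f') (i : Sig) : f [i] = f' [i] := by
  obtain ⟨N, hN⟩ := h
  obtain ⟨ps, hps, -⟩ := hN (restrict f 1) (restrict (caMap 1 μ f) (1 * N)) ⟨f, rfl, rfl⟩
  have hres : restrict f' 1 = restrict f 1 := by
    funext ⟨w, hw⟩
    obtain rfl : w = [] := List.length_eq_zero_iff.mp (by omega)
    exact hroot.symm
  have hτ' : restrict (caMap 1 μ f') (1 * N) = restrict (caMap 1 μ f) (1 * N) := by rw [hτ]
  exact (hps f rfl rfl ⟨[i], rfl⟩ ⟨[], Nat.one_pos⟩).trans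
    (hps f' hres hτ' ⟨[i], rfl⟩ ⟨[], Nat.one_pos⟩).symm

theorem eq_of_root_eq (h : RightClosing 1 μ) {f f' : Config Sig A} (hroot : f [] = f' [])
    (hτ : caMap 1 μ f = caMap 1 μ f') : f = f' := by
  funext v
  induction v using List.reverseRecOn with
  | nil => exact hroot
  | append_singleton v i ih =>
    refine h.apply_singleton_eq (f := shift f v) (f' := shift f' v) ?_ ?_ i
    · simpa [shift] using ih
    · rw [caMap_shift, caMap_shift, hτ]

variable [Fintype A]

theorem eq_of_star_eq (h : RightClosing 1 μ) {g : Sig → Config Sig A} {a : A} {b b' : Sig → A}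
    (hb : ∀ i, b i ∈ rootValues μ (g i)) (hb' : ∀ i, b' i ∈ rootValues μ (g i))
    (hμ : μ (star a b) = μ (star a b')) : b = b' := by
  choose f hf hfb using fun i => mem_rootValues.1 (hb i)
  choose f' hf' hfb' using fun i => mem_rootValues.1 (hb' i)
  have hgraft : graft a f = graft a f' := by
    refine h.eq_of_root_eq rfl ?_
    simp only [caMap_graft, hf, hf', hfb, hfb', hμ]
  funext i
  rw [← hfb, ← hfb']
  exact congrFun hgraft [i]

variable [Fintype Sig]

theorem sum_card_rootValues_graft (h : RightClosing 1 μ) (g : Sig → Config Sig A) :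
    ∑ d, (rootValues μ (graft d g)).card = Fintype.card A * ∏ i, (rootValues μ (g i)).card := by
  classical
  rw [← Finset.card_sigma, ← Finset.card_univ, ← Fintype.card_piFinset, ← Finset.card_product]
  refine (Finset.card_bij (fun x _ => (⟨μ (star x.1 x.2), x.1⟩ : Σ _ : A, A)) ?_ ?_ ?_).symm
  · rintro ⟨a, b⟩ hab
    choose f hf hfb using fun i =>
      mem_rootValues.1 (Fintype.mem_piFinset.1 (Finset.mem_product.1 hab).2 i)
    refine Finset.mem_sigma.2 ⟨Finset.mem_univ _, mem_rootValues.2 ⟨graft a f, ?_, rfl⟩⟩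
    simp only [caMap_graft, hf, hfb]
  · rintro ⟨a, b⟩ hab ⟨a', b'⟩ hab' heq
    obtain ⟨hμ, rfl⟩ := Sigma.mk.inj_iff.1 heq
    exact congrArg (Prod.mk a) <| h.eq_of_star_eq
      (Fintype.mem_piFinset.1 (Finset.mem_product.1 hab).2)
      (Fintype.mem_piFinset.1 (Finset.mem_product.1 hab').2) hμ
  · rintro ⟨d, a⟩ hda
    obtain ⟨F, hF, rfl⟩ := mem_rootValues.1 (Finset.mem_sigma.1 hda).2
    have hchildren : ∀ i, F [i] ∈ rootValues μ (g i) := fun i =>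
      mem_rootValues.2 ⟨shift F [i], by rw [caMap_shift, hF, shift_graft_singleton], rfl⟩
    have hroot : μ (star (F []) fun i => F [i]) = d := by
      rw [← caMap_apply_nil μ F, hF, graft_nil]
    exact ⟨(F [], fun i => F [i]),
      Finset.mem_product.2 ⟨Finset.mem_univ _, Fintype.mem_piFinset.2 hchildren⟩, by rw [hroot]⟩

theorem card_rootValues_le_one (h : RightClosing 1 μ) (hSig : 1 < Fintype.card Sig)
    (g : Config Sig A) : (rootValues μ g).card ≤ 1 := by
  have : Nonempty (Set.range (rootValues μ)) := ⟨⟨_, g, rfl⟩⟩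
  obtain ⟨⟨_, g₀, rfl⟩, hmax⟩ := Finite.exists_max fun s : Set.range (rootValues μ) => s.1.card
  set M := (rootValues μ g₀).card
  have hle : ∀ g', (rootValues μ g').card ≤ M := fun g' => hmax ⟨_, g', rfl⟩
  have hcount : Fintype.card A * M ^ Fintype.card Sig ≤ Fintype.card A * M :=
    calc Fintype.card A * M ^ Fintype.card Sig
        = ∑ d, (rootValues μ (graft d fun _ => g₀)).card := by
          rw [h.sum_card_rootValues_graft, Finset.prod_const, Finset.card_univ]
      _ ≤ ∑ _d : A, M := Finset.sum_le_sum fun d _ => hle _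
      _ = Fintype.card A * M := by simp
  have hpow : M ^ Fintype.card Sig ≤ M :=
    Nat.le_of_mul_le_mul_left hcount (Fintype.card_pos_iff.2 ⟨g []⟩)
  have hM : M ≤ 1 := by
    by_contra! hM
    have := Nat.pow_lt_pow_right hM hSig
    rw [pow_one] at this
    omega
  exact (hle g).trans hM

theorem injective_caMap (h : RightClosing 1 μ) (hSig : 1 < Fintype.card Sig) :
    Injective (caMap 1 μ) := fun f f' hτ =>
  h.eq_of_root_eq (Finset.card_le_one.1 (h.card_rootValues_le_one hSig (caMap 1 μ f)) _
    (mem_rootValues.2 ⟨f, rfl, rfl⟩) _ (mem_rootValues.2 ⟨f', hτ.symm, rfl⟩)) hτ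

theorem graft_mem_range_caMap (h : RightClosing 1 μ) (hSig : 1 < Fintype.card Sig) (d : A)
    {g : Sig → Config Sig A} (hg : ∀ i, g i ∈ Set.range (caMap 1 μ)) :
    graft d g ∈ Set.range (caMap 1 μ) := by
  have hone : ∀ i, (rootValues μ (g i)).card = 1 := fun i => by
    obtain ⟨f, hf⟩ := hg i
    exact le_antisymm (h.card_rootValues_le_one hSig _)
      (Finset.card_pos.2 ⟨f [], mem_rootValues.2 ⟨f, hf, rfl⟩⟩)
  have hsum : ∑ e, (rootValues μ (graft e g)).card = ∑ _e : A, 1 := by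
    simp [h.sum_card_rootValues_graft, hone]
  have hd := (Finset.sum_eq_sum_iff_of_le fun e _ => h.card_rootValues_le_one hSig (graft e g)).1
    hsum d (Finset.mem_univ d)
  obtain ⟨a, ha⟩ := Finset.card_pos.1 (hd ▸ Nat.one_pos)
  obtain ⟨f, hf, -⟩ := mem_rootValues.1 ha
  exact ⟨f, hf⟩

theorem surjective_caMap [TopologicalSpace A] [DiscreteTopology A] (h : RightClosing 1 μ)
    (hSig : 1 < Fintype.card Sig) : Surjective (caMap 1 μ) := fun g =>
  Set.range_eq_univ.1 (eq_univ_of_isClosed_of_graft_mem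
    (isCompact_range (continuous_caMap 1 μ)).isClosed ⟨_, g, rfl⟩
    fun d _ => h.graft_mem_range_caMap hSig d) g

end RightClosing

end RadiusOne

theorem rightClosing_radius_one_open_general [Finite A]
    [TopologicalSpace A] [DiscreteTopology A]
    (μ : (Delta (Fin 2) (1 + 1) → A) → A) (h : RightClosing 1 μ) :
    IsOpenMap (caMap 1 μ) := by
  cases nonempty_fintype A
  have hbij : Bijective (caMap 1 μ) := ⟨h.injective_caMap (by simp), h.surjective_caMap (by simp)⟩
  exact ((continuous_caMap 1 μ).homeoOfEquivCompactToT2 (f := Equiv.ofBijective _ hbij)).isOpenMap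

/-- right-closing CA of radius `1` on the binary tree are open maps. -/
theorem rightClosing_radius_one_open [Finite A] [Nonempty A]
    [TopologicalSpace A] [DiscreteTopology A]
    (μ : (Delta (Fin 2) (1 + 1) → A) → A) (h : RightClosing 1 μ) :
    IsOpenMap (caMap 1 μ) :=
  rightClosing_radius_one_open_general μ h
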